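/- arXiv:2205.01861 — 7 statements merged into one kernel-verified Lean document; each statement's English description precedes it below -/
import Mathlib

section
/- Let ρ₁ < α and ρ₂ < α, let W_Γ be a real Hilbert space, and let E₁, E₂ : W_Γ → V be bounded linear operators such that a_{ρ₁}(E₁u, w) = 0 and a_{ρ₂}(E₂u, w) = 0 for all u ∈ W_Γ and w ∈ V_I, and E₁u − E₂u ∈ V_I for all u ∈ W_Γ. Then for every u ∈ W_Γ, writing δu := E₁u − E₂u, one has a_{ρ₁}(δu, δu) = (ρ₁ − ρ₂)·(δu, E₂u). -/
open scoped RealInnerProductSpace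

theorem apply_sub_sub_mul_inner_sub_eq {V : Type*} [NormedAddCommGroup V] [InnerProductSpace ℝ V]
    (a : V →L[ℝ] V →L[ℝ] ℝ) {ρ₁ ρ₂ : ℝ} {x y : V}
    (hx : a x (x - y) = ρ₁ * ⟪x, x - y⟫) (hy : a y (x - y) = ρ₂ * ⟪y, x - y⟫) :
    a (x - y) (x - y) - ρ₁ * ⟪x - y, x - y⟫ = (ρ₁ - ρ₂) * ⟪x - y, y⟫ := by
  rw [map_sub a, sub_apply, hx, hy, inner_sub_left, real_inner_comm (x - y) y]
  ring

theorem stmt1_general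
    {V : Type*} [NormedAddCommGroup V] [InnerProductSpace ℝ V]
    {WΓ : Type*} [NormedAddCommGroup WΓ] [InnerProductSpace ℝ WΓ]
    (a : V →L[ℝ] V →L[ℝ] ℝ)
    (VI : Submodule ℝ V)
    (ρ₁ ρ₂ : ℝ)
    (E₁ E₂ : WΓ →L[ℝ] V)
    (hE₁ : ∀ u : WΓ, ∀ w ∈ VI, a (E₁ u) w - ρ₁ * ⟪E₁ u, w⟫ = 0)
    (hE₂ : ∀ u : WΓ, ∀ w ∈ VI, a (E₂ u) w - ρ₂ * ⟪E₂ u, w⟫ = 0)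
    (hdiff : ∀ u : WΓ, E₁ u - E₂ u ∈ VI)
    (u : WΓ) :
    a (E₁ u - E₂ u) (E₁ u - E₂ u) - ρ₁ * ⟪E₁ u - E₂ u, E₁ u - E₂ u⟫
      = (ρ₁ - ρ₂) * ⟪E₁ u - E₂ u, E₂ u⟫ :=
  apply_sub_sub_mul_inner_sub_eq a (sub_eq_zero.mp (hE₁ u _ (hdiff u)))
    (sub_eq_zero.mp (hE₂ u _ (hdiff u)))

/-- Let ρ₁ < α and ρ₂ < α, let W_Γ be a real Hilbert space, and let E₁, E₂ : W_Γ → V be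
bounded linear operators such that a_{ρ₁}(E₁u, w) = 0 and a_{ρ₂}(E₂u, w) = 0 for all
u ∈ W_Γ and w ∈ V_I, and E₁u − E₂u ∈ V_I for all u ∈ W_Γ. Then for every u ∈ W_Γ,
writing δu := E₁u − E₂u, one has a_{ρ₁}(δu, δu) = (ρ₁ − ρ₂)·(δu, E₂u). -/
theorem stmt1
    {V : Type*} [NormedAddCommGroup V] [InnerProductSpace ℝ V] [CompleteSpace V]
    {WΓ : Type*} [NormedAddCommGroup WΓ] [InnerProductSpace ℝ WΓ] [CompleteSpace WΓ]
    (a : V →L[ℝ] V →L[ℝ] ℝ)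
    (hsymm : ∀ v w : V, a v w = a w v)
    (VI : Submodule ℝ V) (hVI : IsClosed (VI : Set V))
    (α : ℝ) (hα : 0 < α)
    (hcoer : ∀ w ∈ VI, a w w ≥ α * ‖w‖ ^ 2)
    (ρ₁ ρ₂ : ℝ) (hρ₁ : ρ₁ < α) (hρ₂ : ρ₂ < α)
    (E₁ E₂ : WΓ →L[ℝ] V)
    (hE₁ : ∀ u : WΓ, ∀ w ∈ VI, a (E₁ u) w - ρ₁ * ⟪E₁ u, w⟫ = 0)
    (hE₂ : ∀ u : WΓ, ∀ w ∈ VI, a (E₂ u) w - ρ₂ * ⟪E₂ u, w⟫ = 0)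
    (hdiff : ∀ u : WΓ, E₁ u - E₂ u ∈ VI)
    (u : WΓ) :
    a (E₁ u - E₂ u) (E₁ u - E₂ u) - ρ₁ * ⟪E₁ u - E₂ u, E₁ u - E₂ u⟫
      = (ρ₁ - ρ₂) * ⟪E₁ u - E₂ u, E₂ u⟫ :=
  stmt1_general a VI ρ₁ ρ₂ E₁ E₂ hE₁ hE₂ hdiff u
end

section
/- Let ρ₁ < α and ρ₂ < α, let W_Γ be a real Hilbert space with norm ‖·‖_Γ, and let E₁, E₂ : W_Γ → V be bounded linear operators such that a_{ρ₁}(E₁u, w) = 0 and a_{ρ₂}(E₂u, w) = 0 for all u ∈ W_Γ and w ∈ V_I, E₁u − E₂u ∈ V_I for all u ∈ W_Γ, and the operator norm of E₂ is at most c_E. Then for every u ∈ W_Γ: ‖E₁u − E₂u‖ ≤ (|ρ₁ − ρ₂|/(α − ρ₁))·‖E₂u‖ ≤ (c_E·|ρ₁ − ρ₂|/(α − ρ₁))·‖u‖_Γ. -/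
open scoped RealInnerProductSpace

/-!
Test the two variational equations against `w = E₁ u - E₂ u ∈ V_I` and subtract:
`a(w, w) = ρ₁ ‖w‖² + (ρ₁ - ρ₂) ⟪E₂ u, w⟫`. Coercivity on `V_I` and Cauchy–Schwarz then give
`(α - ρ₁) ‖w‖² ≤ |ρ₁ - ρ₂| ‖E₂ u‖ ‖w‖`, and we divide by `(α - ρ₁) ‖w‖`.
-/

section ShiftedForm

variable {V : Type*} [NormedAddCommGroup V] [InnerProductSpace ℝ V]
  (a : V →L[ℝ] V →L[ℝ] ℝ) {v₁ v₂ : V} {ρ₁ ρ₂ : ℝ}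

theorem apply_sub_sub_eq_of_shifted_eq_zero
    (h₁ : a v₁ (v₁ - v₂) - ρ₁ * ⟪v₁, v₁ - v₂⟫ = 0)
    (h₂ : a v₂ (v₁ - v₂) - ρ₂ * ⟪v₂, v₁ - v₂⟫ = 0) :
    a (v₁ - v₂) (v₁ - v₂) = ρ₁ * ‖v₁ - v₂‖ ^ 2 + (ρ₁ - ρ₂) * ⟪v₂, v₁ - v₂⟫ := by
  have hv₁ : ⟪v₁, v₁ - v₂⟫ = ‖v₁ - v₂‖ ^ 2 + ⟪v₂, v₁ - v₂⟫ := by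
    rw [← real_inner_self_eq_norm_sq, ← inner_add_left, sub_add_cancel]
  rw [map_sub a v₁ v₂, sub_apply]
  linear_combination h₁ - h₂ + ρ₁ * hv₁

theorem norm_sub_le_of_shifted_eq_zero {α : ℝ} (hρ₁ : ρ₁ < α)
    (hcoer : a (v₁ - v₂) (v₁ - v₂) ≥ α * ‖v₁ - v₂‖ ^ 2)
    (h₁ : a v₁ (v₁ - v₂) - ρ₁ * ⟪v₁, v₁ - v₂⟫ = 0)
    (h₂ : a v₂ (v₁ - v₂) - ρ₂ * ⟪v₂, v₁ - v₂⟫ = 0) :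
    ‖v₁ - v₂‖ ≤ |ρ₁ - ρ₂| / (α - ρ₁) * ‖v₂‖ := by
  have hgap : 0 < α - ρ₁ := sub_pos.mpr hρ₁
  have hcs : (ρ₁ - ρ₂) * ⟪v₂, v₁ - v₂⟫ ≤ |ρ₁ - ρ₂| * ‖v₂‖ * ‖v₁ - v₂‖ := by
    calc (ρ₁ - ρ₂) * ⟪v₂, v₁ - v₂⟫ ≤ |ρ₁ - ρ₂| * |⟪v₂, v₁ - v₂⟫| :=
          (le_abs_self _).trans (abs_mul _ _).le
      _ ≤ |ρ₁ - ρ₂| * ‖v₂‖ * ‖v₁ - v₂‖ := by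
          rw [mul_assoc]
          exact mul_le_mul_of_nonneg_left (abs_real_inner_le_norm _ _) (abs_nonneg _)
  have hquad : (α - ρ₁) * ‖v₁ - v₂‖ * ‖v₁ - v₂‖ ≤ |ρ₁ - ρ₂| * ‖v₂‖ * ‖v₁ - v₂‖ := by
    rw [apply_sub_sub_eq_of_shifted_eq_zero a h₁ h₂] at hcoer
    nlinarith
  rcases (norm_nonneg (v₁ - v₂)).eq_or_lt with h0 | hpos
  · rw [← h0]
    positivity
  · rw [div_mul_eq_mul_div, le_div_iff₀ hgap, mul_comm]
    exact le_of_mul_le_mul_right hquad hpos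

end ShiftedForm

theorem stmt2_general
    {V : Type*} [NormedAddCommGroup V] [InnerProductSpace ℝ V]
    {WΓ : Type*} [NormedAddCommGroup WΓ] [InnerProductSpace ℝ WΓ]
    (a : V →L[ℝ] V →L[ℝ] ℝ)
    (VI : Submodule ℝ V)
    (α : ℝ)
    (hcoer : ∀ w ∈ VI, a w w ≥ α * ‖w‖ ^ 2)
    (ρ₁ ρ₂ : ℝ) (hρ₁ : ρ₁ < α)
    (E₁ E₂ : WΓ →L[ℝ] V)
    (hE₁ : ∀ u : WΓ, ∀ w ∈ VI, a (E₁ u) w - ρ₁ * ⟪E₁ u, w⟫ = 0)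
    (hE₂ : ∀ u : WΓ, ∀ w ∈ VI, a (E₂ u) w - ρ₂ * ⟪E₂ u, w⟫ = 0)
    (hdiff : ∀ u : WΓ, E₁ u - E₂ u ∈ VI)
    (cE : ℝ) (hcE : ‖E₂‖ ≤ cE)
    (u : WΓ) :
    ‖E₁ u - E₂ u‖ ≤ |ρ₁ - ρ₂| / (α - ρ₁) * ‖E₂ u‖ ∧
      |ρ₁ - ρ₂| / (α - ρ₁) * ‖E₂ u‖ ≤ cE * |ρ₁ - ρ₂| / (α - ρ₁) * ‖u‖ := by
  have hw := hdiff u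
  refine ⟨norm_sub_le_of_shifted_eq_zero a hρ₁ (hcoer _ hw) (hE₁ u _ hw) (hE₂ u _ hw), ?_⟩
  have hE₂u : ‖E₂ u‖ ≤ cE * ‖u‖ := E₂.le_of_opNorm_le hcE u
  have hgap : 0 ≤ |ρ₁ - ρ₂| / (α - ρ₁) := div_nonneg (abs_nonneg _) (sub_pos.mpr hρ₁).le
  calc |ρ₁ - ρ₂| / (α - ρ₁) * ‖E₂ u‖ ≤ |ρ₁ - ρ₂| / (α - ρ₁) * (cE * ‖u‖) :=
        mul_le_mul_of_nonneg_left hE₂u hgap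
    _ = cE * |ρ₁ - ρ₂| / (α - ρ₁) * ‖u‖ := by ring

/-- Let ρ₁ < α and ρ₂ < α, let W_Γ be a real Hilbert space with norm ‖·‖_Γ, and let
E₁, E₂ : W_Γ → V be bounded linear operators such that a_{ρ₁}(E₁u, w) = 0 and
a_{ρ₂}(E₂u, w) = 0 for all u ∈ W_Γ and w ∈ V_I, E₁u − E₂u ∈ V_I for all u ∈ W_Γ, and
the operator norm of E₂ is at most c_E. Then for every u ∈ W_Γ:
‖E₁u − E₂u‖ ≤ (|ρ₁ − ρ₂|/(α − ρ₁))·‖E₂u‖ ≤ (c_E·|ρ₁ − ρ₂|/(α − ρ₁))·‖u‖_Γ. -/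
theorem stmt2
    {V : Type*} [NormedAddCommGroup V] [InnerProductSpace ℝ V] [CompleteSpace V]
    {WΓ : Type*} [NormedAddCommGroup WΓ] [InnerProductSpace ℝ WΓ] [CompleteSpace WΓ]
    (a : V →L[ℝ] V →L[ℝ] ℝ)
    (hsymm : ∀ v w : V, a v w = a w v)
    (VI : Submodule ℝ V) (hVI : IsClosed (VI : Set V))
    (α : ℝ) (hα : 0 < α)
    (hcoer : ∀ w ∈ VI, a w w ≥ α * ‖w‖ ^ 2)
    (ρ₁ ρ₂ : ℝ) (hρ₁ : ρ₁ < α) (hρ₂ : ρ₂ < α)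
    (E₁ E₂ : WΓ →L[ℝ] V)
    (hE₁ : ∀ u : WΓ, ∀ w ∈ VI, a (E₁ u) w - ρ₁ * ⟪E₁ u, w⟫ = 0)
    (hE₂ : ∀ u : WΓ, ∀ w ∈ VI, a (E₂ u) w - ρ₂ * ⟪E₂ u, w⟫ = 0)
    (hdiff : ∀ u : WΓ, E₁ u - E₂ u ∈ VI)
    (cE : ℝ) (hcE : ‖E₂‖ ≤ cE)
    (u : WΓ) :
    ‖E₁ u - E₂ u‖ ≤ |ρ₁ - ρ₂| / (α - ρ₁) * ‖E₂ u‖ ∧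
      |ρ₁ - ρ₂| / (α - ρ₁) * ‖E₂ u‖ ≤ cE * |ρ₁ - ρ₂| / (α - ρ₁) * ‖u‖ :=
  stmt2_general a VI α hcoer ρ₁ ρ₂ hρ₁ E₁ E₂ hE₁ hE₂ hdiff cE hcE u
end

section
/- Suppose the map σ ↦ E_σ is differentiable in operator norm at a point ρ < α. Then for all u₁, u₂ ∈ W_Γ, the real-valued function σ ↦ s_σ(u₁,u₂) = a_σ(E_σu₁, E_σu₂) is differentiable at ρ with derivative −(E_ρu₁, E_ρu₂). -/
open scoped RealInnerProductSpace Topology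
open Filter

/-!
Write `D` for the derivative of `σ ↦ E_σ` at `ρ`. Since `E_σ u - E_ρ u ∈ V_I` and `V_I` is closed,
the difference quotients, hence `D u`, lie in `V_I`. Differentiating `a_σ(E_σ u₁, E_σ u₂)` by the
product rule gives `-(E_ρ u₁, E_ρ u₂) + a_ρ(E_ρ u₁, D u₂) + a_ρ(D u₁, E_ρ u₂)`, and the last two
terms vanish because `E_ρ u` is `a_ρ`-orthogonal to `V_I`.
-/

theorem Submodule.mem_of_hasDerivAt {𝕜 F : Type*} [NontriviallyNormedField 𝕜]
    [NormedAddCommGroup F] [NormedSpace 𝕜 F] {S : Submodule 𝕜 F} (hS : IsClosed (S : Set F))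
    {f : 𝕜 → F} {f' : F} {x : 𝕜} (hf : HasDerivAt f f' x)
    (hinc : ∀ᶠ y in 𝓝[≠] x, f y - f x ∈ S) : f' ∈ S := by
  refine hS.mem_of_tendsto (hasDerivAt_iff_tendsto_slope.mp hf) ?_
  filter_upwards [hinc] with y hy
  rw [slope_def_module]
  exact S.smul_mem _ hy

theorem hasDerivAt_bilin_sub_mul_inner {V : Type*} [NormedAddCommGroup V] [InnerProductSpace ℝ V]
    (a : V →L[ℝ] V →L[ℝ] ℝ) {f g : ℝ → V} {f' g' : V} {ρ : ℝ}
    (hf : HasDerivAt f f' ρ) (hg : HasDerivAt g g' ρ) :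
    HasDerivAt (fun σ => a (f σ) (g σ) - σ * ⟪f σ, g σ⟫)
      (a (f ρ) g' - ρ * ⟪f ρ, g'⟫ + (a f' (g ρ) - ρ * ⟪f', g ρ⟫) - ⟪f ρ, g ρ⟫) ρ := by
  have hform := a.hasDerivAt_of_bilinear (fun _ => hf) (fun _ => hg)
  have hinner := (hasDerivAt_id' ρ).mul (hf.inner ℝ hg)
  exact (hform.sub hinner).congr_deriv (by ring)

theorem stmt3_general
    {V : Type*} [NormedAddCommGroup V] [InnerProductSpace ℝ V]
    {WΓ : Type*} [NormedAddCommGroup WΓ] [InnerProductSpace ℝ WΓ]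
    (a : V →L[ℝ] V →L[ℝ] ℝ)
    (hsymm : ∀ v w : V, a v w = a w v)
    (VI : Submodule ℝ V) (hVI : IsClosed (VI : Set V))
    (α : ℝ)
    (E : ℝ → (WΓ →L[ℝ] V))
    (hext : ∀ σ, σ < α → ∀ u : WΓ, ∀ w ∈ VI, a (E σ u) w - σ * ⟪E σ u, w⟫ = 0)
    (hdiffVI : ∀ σ₁ σ₂, σ₁ < α → σ₂ < α → ∀ u : WΓ, E σ₁ u - E σ₂ u ∈ VI)
    (ρ : ℝ) (hρ : ρ < α)
    (hE : DifferentiableAt ℝ E ρ)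
    (u₁ u₂ : WΓ) :
    HasDerivAt (fun σ => a (E σ u₁) (E σ u₂) - σ * ⟪E σ u₁, E σ u₂⟫)
      (-⟪E ρ u₁, E ρ u₂⟫) ρ := by
  set D := deriv E ρ
  have hEu (u : WΓ) : HasDerivAt (fun σ => E σ u) (D u) ρ := by
    simpa using hE.hasDerivAt.clm_apply (hasDerivAt_const ρ u)
  have hDmem (u : WΓ) : D u ∈ VI := by
    refine VI.mem_of_hasDerivAt hVI (hEu u) ?_
    filter_upwards [nhdsWithin_le_nhds (Iio_mem_nhds hρ)] with σ hσ
    exact hdiffVI σ ρ hσ hρ u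
  have h₁ := hext ρ hρ u₁ (D u₂) (hDmem u₂)
  have h₂ := hext ρ hρ u₂ (D u₁) (hDmem u₁)
  rw [← hsymm, real_inner_comm] at h₂
  simpa [h₁, h₂] using hasDerivAt_bilin_sub_mul_inner a (hEu u₁) (hEu u₂)

/-- Suppose the map σ ↦ E_σ is differentiable in operator norm at a point ρ < α.
Then for all u₁, u₂ ∈ W_Γ, the function σ ↦ s_σ(u₁,u₂) = a_σ(E_σu₁, E_σu₂) is
differentiable at ρ with derivative −(E_ρu₁, E_ρu₂). -/
theorem stmt3
    {V : Type*} [NormedAddCommGroup V] [InnerProductSpace ℝ V] [CompleteSpace V]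
    {WΓ : Type*} [NormedAddCommGroup WΓ] [InnerProductSpace ℝ WΓ] [CompleteSpace WΓ]
    (a : V →L[ℝ] V →L[ℝ] ℝ)
    (hsymm : ∀ v w : V, a v w = a w v)
    (VI : Submodule ℝ V) (hVI : IsClosed (VI : Set V))
    (α : ℝ) (hα : 0 < α)
    (hcoer : ∀ w ∈ VI, a w w ≥ α * ‖w‖ ^ 2)
    (E : ℝ → (WΓ →L[ℝ] V))
    (hext : ∀ σ, σ < α → ∀ u : WΓ, ∀ w ∈ VI, a (E σ u) w - σ * ⟪E σ u, w⟫ = 0)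
    (hdiffVI : ∀ σ₁ σ₂, σ₁ < α → σ₂ < α → ∀ u : WΓ, E σ₁ u - E σ₂ u ∈ VI)
    (ρ : ℝ) (hρ : ρ < α)
    (hE : DifferentiableAt ℝ E ρ)
    (u₁ u₂ : WΓ) :
    HasDerivAt (fun σ => a (E σ u₁) (E σ u₂) - σ * ⟪E σ u₁, E σ u₂⟫)
      (-⟪E ρ u₁, E ρ u₂⟫) ρ :=
  stmt3_general a hsymm VI hVI α E hext hdiffVI ρ hρ hE u₁ u₂
end

section
/- Let ρ < α and suppose: the map σ ↦ E_σ is differentiable in operator norm at ρ; θ : ℝ → ℝ and u : ℝ → W_Γ are differentiable at ρ; u(σ) ≠ 0 and the eigenvalue equation s_σ(u(σ), w) = θ(σ)·(u(σ), w)_Γ holds for all w ∈ W_Γ and all σ in a neighborhood of ρ; and E_ρ(u(ρ)) ≠ 0. Then θ'(ρ) = −‖E_ρ(u(ρ))‖² / ‖u(ρ)‖_Γ² < 0. -/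
open scoped RealInnerProductSpace
open Filter Topology

/-! Differentiate `s_σ(u σ, u σ) = θ σ ‖u σ‖²` at `ρ`. With `v = E_ρ (u ρ)` the left side has
derivative `2 a_ρ(v, v') - ‖v‖²`, where `v' = E'_ρ (u ρ) + E_ρ (u' ρ)`. The first summand lies in
`V_I` (it is a limit of the differences `E_σ - E_ρ`), so it is `a_ρ`-orthogonal to `v`; the second
contributes `2 θ ⟪u, u'⟫` by the eigenvalue equation, which cancels the same term on the right,
leaving `θ' ‖u‖² = -‖v‖²`. -/

theorem HasDerivAt.mem_of_eventually_sub_mem {F : Type*} [NormedAddCommGroup F]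
    [NormedSpace ℝ F] {f : ℝ → F} {f' : F} {ρ : ℝ} (hf : HasDerivAt f f' ρ)
    {S : Submodule ℝ F} (hS : IsClosed (S : Set F)) (hsub : ∀ᶠ σ in 𝓝 ρ, f σ - f ρ ∈ S) :
    f' ∈ S := by
  refine hS.mem_of_tendsto (hasDerivAt_iff_tendsto_slope.mp hf) ?_
  filter_upwards [eventually_nhdsWithin_of_eventually_nhds hsub] with σ hσ
  rw [slope_def_module]
  exact S.smul_mem _ hσ

theorem HasDerivAt.shiftedForm_self {V : Type*} [NormedAddCommGroup V]
    [InnerProductSpace ℝ V] {a : V →L[ℝ] V →L[ℝ] ℝ} (hsymm : ∀ v w : V, a v w = a w v)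
    {v : ℝ → V} {v' : V} {ρ : ℝ} (hv : HasDerivAt v v' ρ) :
    HasDerivAt (fun σ => a (v σ) (v σ) - σ * ⟪v σ, v σ⟫)
      (2 * (a (v ρ) v' - ρ * ⟪v ρ, v'⟫) - ‖v ρ‖ ^ 2) ρ := by
  have ha : HasDerivAt (fun σ => a (v σ) (v σ)) (a v' (v ρ) + a (v ρ) v') ρ := by
    simpa using ((hasDerivAt_const ρ a).clm_apply hv).clm_apply hv
  refine (ha.sub ((hasDerivAt_id ρ).mul (hv.inner ℝ hv))).congr_deriv ?_
  rw [hsymm, real_inner_comm v', real_inner_self_eq_norm_sq, id]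
  ring

theorem stmt4_general
    {V : Type*} [NormedAddCommGroup V] [InnerProductSpace ℝ V]
    {WΓ : Type*} [NormedAddCommGroup WΓ] [InnerProductSpace ℝ WΓ]
    (a : V →L[ℝ] V →L[ℝ] ℝ)
    (hsymm : ∀ v w : V, a v w = a w v)
    (VI : Submodule ℝ V) (hVI : IsClosed (VI : Set V))
    (α : ℝ)
    (E : ℝ → (WΓ →L[ℝ] V))
    (hext : ∀ σ, σ < α → ∀ u : WΓ, ∀ w ∈ VI, a (E σ u) w - σ * ⟪E σ u, w⟫ = 0)
    (hdiffVI : ∀ σ₁ σ₂, σ₁ < α → σ₂ < α → ∀ u : WΓ, E σ₁ u - E σ₂ u ∈ VI)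
    (ρ : ℝ) (hρ : ρ < α)
    (hE : DifferentiableAt ℝ E ρ)
    (θ : ℝ → ℝ) (u : ℝ → WΓ)
    (hθ : DifferentiableAt ℝ θ ρ) (hu : DifferentiableAt ℝ u ρ)
    (heig : ∀ᶠ σ in nhds ρ, u σ ≠ 0 ∧ ∀ w : WΓ,
      a (E σ (u σ)) (E σ w) - σ * ⟪E σ (u σ), E σ w⟫ = θ σ * ⟪u σ, w⟫)
    (hne : E ρ (u ρ) ≠ 0) :
    deriv θ ρ = -‖E ρ (u ρ)‖ ^ 2 / ‖u ρ‖ ^ 2 ∧ deriv θ ρ < 0 := by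
  obtain ⟨huρ, heigρ⟩ := heig.self_of_nhds
  set v := E ρ (u ρ)
  have hv := hE.hasDerivAt.clm_apply hu.hasDerivAt
  have hE'u : deriv E ρ (u ρ) ∈ VI := by
    refine ((ContinuousLinearMap.apply ℝ V (u ρ)).hasFDerivAt.comp_hasDerivAt ρ
      hE.hasDerivAt).mem_of_eventually_sub_mem hVI ?_
    filter_upwards [eventually_lt_nhds hρ] with σ hσ
    exact hdiffVI σ ρ hσ hρ (u ρ)
  set v' := deriv E ρ (u ρ) + E ρ (deriv u ρ) with hv'
  have hcross : a v v' - ρ * ⟪v, v'⟫ = θ ρ * ⟪u ρ, deriv u ρ⟫ := by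
    rw [hv', map_add, inner_add_right]
    linarith [hext ρ hρ (u ρ) _ hE'u, heigρ (deriv u ρ)]
  have hrayleigh := hθ.hasDerivAt.mul (hu.hasDerivAt.inner ℝ hu.hasDerivAt)
  have hderiv := (hv.shiftedForm_self hsymm).unique <|
    hrayleigh.congr_of_eventuallyEq (heig.mono fun σ hσ => hσ.2 (u σ))
  rw [hcross, real_inner_comm (deriv u ρ), real_inner_self_eq_norm_sq] at hderiv
  have hupos : 0 < ‖u ρ‖ ^ 2 := by positivity
  have hvpos : 0 < ‖v‖ ^ 2 := by positivity
  have hθ' : deriv θ ρ = -‖v‖ ^ 2 / ‖u ρ‖ ^ 2 := by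
    rw [eq_div_iff hupos.ne']
    linarith
  exact ⟨hθ', hθ' ▸ div_neg_of_neg_of_pos (neg_neg_of_pos hvpos) hupos⟩

/-- Let ρ < α and suppose: the map σ ↦ E_σ is differentiable in operator norm at ρ;
θ : ℝ → ℝ and u : ℝ → W_Γ are differentiable at ρ; u(σ) ≠ 0 and the eigenvalue equation
s_σ(u(σ), w) = θ(σ)·(u(σ), w)_Γ holds for all w ∈ W_Γ and all σ in a neighborhood of ρ;
and E_ρ(u(ρ)) ≠ 0. Then θ'(ρ) = −‖E_ρ(u(ρ))‖² / ‖u(ρ)‖_Γ² < 0. -/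
theorem stmt4
    {V : Type*} [NormedAddCommGroup V] [InnerProductSpace ℝ V] [CompleteSpace V]
    {WΓ : Type*} [NormedAddCommGroup WΓ] [InnerProductSpace ℝ WΓ] [CompleteSpace WΓ]
    (a : V →L[ℝ] V →L[ℝ] ℝ)
    (hsymm : ∀ v w : V, a v w = a w v)
    (VI : Submodule ℝ V) (hVI : IsClosed (VI : Set V))
    (α : ℝ) (hα : 0 < α)
    (hcoer : ∀ w ∈ VI, a w w ≥ α * ‖w‖ ^ 2)
    (E : ℝ → (WΓ →L[ℝ] V))
    (hext : ∀ σ, σ < α → ∀ u : WΓ, ∀ w ∈ VI, a (E σ u) w - σ * ⟪E σ u, w⟫ = 0)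
    (hdiffVI : ∀ σ₁ σ₂, σ₁ < α → σ₂ < α → ∀ u : WΓ, E σ₁ u - E σ₂ u ∈ VI)
    (ρ : ℝ) (hρ : ρ < α)
    (hE : DifferentiableAt ℝ E ρ)
    (θ : ℝ → ℝ) (u : ℝ → WΓ)
    (hθ : DifferentiableAt ℝ θ ρ) (hu : DifferentiableAt ℝ u ρ)
    (heig : ∀ᶠ σ in nhds ρ, u σ ≠ 0 ∧ ∀ w : WΓ,
      a (E σ (u σ)) (E σ w) - σ * ⟪E σ (u σ), E σ w⟫ = θ σ * ⟪u σ, w⟫)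
    (hne : E ρ (u ρ) ≠ 0) :
    deriv θ ρ = -‖E ρ (u ρ)‖ ^ 2 / ‖u ρ‖ ^ 2 ∧ deriv θ ρ < 0 :=
  stmt4_general a hsymm VI hVI α E hext hdiffVI ρ hρ hE θ u hθ hu heig hne
end

section
/- Let W_Γ be a real Hilbert space with inner product (·,·)_Γ and norm ‖·‖_Γ, and let s : ℝ → (bounded symmetric bilinear forms on W_Γ) be such that on a neighborhood of a point ρ the maps σ ↦ s_σ, a first-derivative family σ ↦ s'_σ (with s'' the derivative of s' at ρ), θ : ℝ → ℝ and u : ℝ → W_Γ are defined, with s differentiable with derivative s' near ρ, s' differentiable at ρ with derivative s'', and θ, u twice differentiable at ρ. Suppose the eigenvalue equation s_σ(u(σ), w) = θ(σ)·(u(σ), w)_Γ holds for all w ∈ W_Γ and all σ in a neighborhood of ρ. Then θ''(ρ)·‖u(ρ)‖_Γ² = s''(u(ρ), u(ρ)) + 2·θ(ρ)·‖u'(ρ)‖_Γ² − 2·s_ρ(u'(ρ), u'(ρ)), where u' and u'' denote the first and second derivatives of u. -/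
open scoped RealInnerProductSpace Topology

/-!
Differentiating the weak eigenvalue equation `s_σ(u, w) = θ (u, w)` once gives, near `ρ`,
`s'(u, w) + s(u', w) = θ' (u, w) + θ (u', w)`, and differentiating again at `ρ` gives
`s''(u, w) + 2 s'(u', w) + s(u'', w) = θ'' (u, w) + 2 θ' (u', w) + θ (u'', w)`.
Take `w = u` in the second identity and `w = u'` in the first. Since `s'_ρ` is symmetric
(as the derivative of symmetric forms) the mixed terms `s'(u, u')` and `θ'(u, u')` cancel,
and the terms in `u''` cancel because `s_ρ(u'', u) = s_ρ(u, u'') = θ (u, u'')`.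
-/

section BilinearDerivative

variable {𝕜 : Type*} [NontriviallyNormedField 𝕜]
  {E F G : Type*} [NormedAddCommGroup E] [NormedSpace 𝕜 E] [NormedAddCommGroup F]
  [NormedSpace 𝕜 F] [NormedAddCommGroup G] [NormedSpace 𝕜 G] {t : 𝕜}

theorem HasDerivAt.clm_apply₂ {B : 𝕜 → E →L[𝕜] F →L[𝕜] G} {B' : E →L[𝕜] F →L[𝕜] G}
    {x : 𝕜 → E} {x' : E} {y : 𝕜 → F} {y' : F}
    (hB : HasDerivAt B B' t) (hx : HasDerivAt x x' t) (hy : HasDerivAt y y' t) :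
    HasDerivAt (fun τ ↦ B τ (x τ) (y τ)) (B' (x t) (y t) + B t x' (y t) + B t (x t) y') t := by
  simpa using (hB.clm_apply hx).clm_apply hy

theorem HasDerivAt.clm_apply_comm {B : 𝕜 → E →L[𝕜] E →L[𝕜] G} {B' : E →L[𝕜] E →L[𝕜] G}
    (hB : HasDerivAt B B' t) (hsymm : ∀ᶠ τ in 𝓝 t, ∀ x y, B τ x y = B τ y x) (x y : E) :
    B' x y = B' y x := by
  have hxy : HasDerivAt (fun τ ↦ B τ x y) (B' x y) t := by
    simpa using hB.clm_apply₂ (hasDerivAt_const t x) (hasDerivAt_const t y)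
  have hyx : HasDerivAt (fun τ ↦ B τ y x) (B' y x) t := by
    simpa using hB.clm_apply₂ (hasDerivAt_const t y) (hasDerivAt_const t x)
  exact hxy.unique (hyx.congr_of_eventuallyEq (hsymm.mono fun τ h ↦ h x y))

end BilinearDerivative

section WeakEigenpair

variable {E : Type*} [NormedAddCommGroup E] [InnerProductSpace ℝ E]
  {s s' : ℝ → E →L[ℝ] E →L[ℝ] ℝ} {θ θ' : ℝ → ℝ} {u u' : ℝ → E} {ρ : ℝ}

theorem eigen_eq_deriv_eventually
    (hs : ∀ᶠ σ in 𝓝 ρ, HasDerivAt s (s' σ) σ) (hθ : ∀ᶠ σ in 𝓝 ρ, HasDerivAt θ (θ' σ) σ)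
    (hu : ∀ᶠ σ in 𝓝 ρ, HasDerivAt u (u' σ) σ)
    (heig : ∀ᶠ σ in 𝓝 ρ, ∀ w, s σ (u σ) w = θ σ * ⟪u σ, w⟫) (w : E) :
    ∀ᶠ σ in 𝓝 ρ, s' σ (u σ) w + s σ (u' σ) w = θ' σ * ⟪u σ, w⟫ + θ σ * ⟪u' σ, w⟫ := by
  filter_upwards [hs, hθ, hu, heig.eventually_nhds] with σ hsσ hθσ huσ heigσ
  have hlhs : HasDerivAt (fun τ ↦ s τ (u τ) w) (s' σ (u σ) w + s σ (u' σ) w) σ := by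
    simpa using hsσ.clm_apply₂ huσ (hasDerivAt_const σ w)
  have hrhs : HasDerivAt (fun τ ↦ θ τ * ⟪u τ, w⟫)
      (θ' σ * ⟪u σ, w⟫ + θ σ * ⟪u' σ, w⟫) σ := by
    exact (hθσ.mul (huσ.inner ℝ (hasDerivAt_const σ w))).congr_deriv (by simp)
  exact hlhs.unique (hrhs.congr_of_eventuallyEq (heigσ.mono fun τ h ↦ h w))

theorem eigen_eq_deriv₂ {s'' : E →L[ℝ] E →L[ℝ] ℝ} {θ'' : ℝ} {u'' : E}
    (hs : ∀ᶠ σ in 𝓝 ρ, HasDerivAt s (s' σ) σ) (hs' : HasDerivAt s' s'' ρ)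
    (hθ : ∀ᶠ σ in 𝓝 ρ, HasDerivAt θ (θ' σ) σ) (hθ' : HasDerivAt θ' θ'' ρ)
    (hu : ∀ᶠ σ in 𝓝 ρ, HasDerivAt u (u' σ) σ) (hu' : HasDerivAt u' u'' ρ)
    (heig : ∀ᶠ σ in 𝓝 ρ, ∀ w, s σ (u σ) w = θ σ * ⟪u σ, w⟫) (w : E) :
    s'' (u ρ) w + 2 * s' ρ (u' ρ) w + s ρ u'' w =
      θ'' * ⟪u ρ, w⟫ + 2 * θ' ρ * ⟪u' ρ, w⟫ + θ ρ * ⟪u'', w⟫ := by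
  have hlhs : HasDerivAt (fun σ ↦ s' σ (u σ) w + s σ (u' σ) w)
      (s'' (u ρ) w + 2 * s' ρ (u' ρ) w + s ρ u'' w) ρ := by
    refine ((hs'.clm_apply₂ hu.self_of_nhds (hasDerivAt_const ρ w)).add
      (hs.self_of_nhds.clm_apply₂ hu' (hasDerivAt_const ρ w))).congr_deriv ?_
    simp only [map_zero, add_zero]
    ring
  have hrhs : HasDerivAt (fun σ ↦ θ' σ * ⟪u σ, w⟫ + θ σ * ⟪u' σ, w⟫)
      (θ'' * ⟪u ρ, w⟫ + 2 * θ' ρ * ⟪u' ρ, w⟫ + θ ρ * ⟪u'', w⟫) ρ := by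
    refine ((hθ'.mul (hu.self_of_nhds.inner ℝ (hasDerivAt_const ρ w))).add
      (hθ.self_of_nhds.mul (hu'.inner ℝ (hasDerivAt_const ρ w)))).congr_deriv ?_
    simp only [inner_zero_right, zero_add]
    ring
  exact hlhs.unique
    (hrhs.congr_of_eventuallyEq (eigen_eq_deriv_eventually hs hθ hu heig w))

end WeakEigenpair

theorem stmt7_general
    {WΓ : Type*} [NormedAddCommGroup WΓ] [InnerProductSpace ℝ WΓ]
    (s : ℝ → (WΓ →L[ℝ] WΓ →L[ℝ] ℝ))
    (hsymm : ∀ σ (w₁ w₂ : WΓ), s σ w₁ w₂ = s σ w₂ w₁)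
    (s' : ℝ → (WΓ →L[ℝ] WΓ →L[ℝ] ℝ)) (s'' : WΓ →L[ℝ] WΓ →L[ℝ] ℝ)
    (θ θ' : ℝ → ℝ) (θ'' : ℝ) (u u' : ℝ → WΓ) (u'' : WΓ)
    (ρ : ℝ)
    (hs : ∀ᶠ σ in nhds ρ, HasDerivAt s (s' σ) σ)
    (hs' : HasDerivAt s' s'' ρ)
    (hθ : ∀ᶠ σ in nhds ρ, HasDerivAt θ (θ' σ) σ)
    (hθ' : HasDerivAt θ' θ'' ρ)
    (hu : ∀ᶠ σ in nhds ρ, HasDerivAt u (u' σ) σ)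
    (hu' : HasDerivAt u' u'' ρ)
    (heig : ∀ᶠ σ in nhds ρ, ∀ w : WΓ, s σ (u σ) w = θ σ * ⟪u σ, w⟫) :
    θ'' * ‖u ρ‖ ^ 2 =
      s'' (u ρ) (u ρ) + 2 * θ ρ * ‖u' ρ‖ ^ 2 - 2 * s ρ (u' ρ) (u' ρ) := by
  have first := (eigen_eq_deriv_eventually hs hθ hu heig (u' ρ)).self_of_nhds
  have second := eigen_eq_deriv₂ hs hs' hθ hθ' hu hu' heig (u ρ)
  have hs'_symm := hs.self_of_nhds.clm_apply_comm (.of_forall hsymm) (u' ρ) (u ρ)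
  rw [hsymm ρ u'', heig.self_of_nhds u'', hs'_symm, real_inner_comm (u ρ) (u' ρ),
    real_inner_comm (u ρ) u'', real_inner_self_eq_norm_sq] at second
  rw [real_inner_self_eq_norm_sq] at first
  linarith

/-- Second-order perturbation identity for a differentiable family of bounded symmetric
bilinear forms s_σ on a real Hilbert space W_Γ with differentiable eigenpair family
(θ(σ), u(σ)) satisfying s_σ(u(σ), w) = θ(σ)(u(σ), w)_Γ for all w:
θ''(ρ)·‖u(ρ)‖² = s''(u(ρ), u(ρ)) + 2·θ(ρ)·‖u'(ρ)‖² − 2·s_ρ(u'(ρ), u'(ρ)). -/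
theorem stmt7
    {WΓ : Type*} [NormedAddCommGroup WΓ] [InnerProductSpace ℝ WΓ] [CompleteSpace WΓ]
    (s : ℝ → (WΓ →L[ℝ] WΓ →L[ℝ] ℝ))
    (hsymm : ∀ σ (w₁ w₂ : WΓ), s σ w₁ w₂ = s σ w₂ w₁)
    (s' : ℝ → (WΓ →L[ℝ] WΓ →L[ℝ] ℝ)) (s'' : WΓ →L[ℝ] WΓ →L[ℝ] ℝ)
    (θ θ' : ℝ → ℝ) (θ'' : ℝ) (u u' : ℝ → WΓ) (u'' : WΓ)
    (ρ : ℝ)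
    (hs : ∀ᶠ σ in nhds ρ, HasDerivAt s (s' σ) σ)
    (hs' : HasDerivAt s' s'' ρ)
    (hθ : ∀ᶠ σ in nhds ρ, HasDerivAt θ (θ' σ) σ)
    (hθ' : HasDerivAt θ' θ'' ρ)
    (hu : ∀ᶠ σ in nhds ρ, HasDerivAt u (u' σ) σ)
    (hu' : HasDerivAt u' u'' ρ)
    (heig : ∀ᶠ σ in nhds ρ, ∀ w : WΓ, s σ (u σ) w = θ σ * ⟪u σ, w⟫) :
    θ'' * ‖u ρ‖ ^ 2 =
      s'' (u ρ) (u ρ) + 2 * θ ρ * ‖u' ρ‖ ^ 2 - 2 * s ρ (u' ρ) (u' ρ) :=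
  stmt7_general s hsymm s' s'' θ θ' θ'' u u' u'' ρ hs hs' hθ hθ' hu hu' heig
end

section
/- For every fixed u ∈ W_Γ, the function ρ ↦ s_ρ(u,u) = a(E_ρu, E_ρu) − ρ·(E_ρu, E_ρu) is concave on the interval (−∞, α). -/
open scoped RealInnerProductSpace

/-!
Fix `σ < α` and write `E σ u = E ρ u + d` with `d ∈ V_I`. Since `E ρ u` is `a_ρ`-orthogonal to
`V_I` and `a_ρ` is coercive on `V_I` for `ρ < α`, `s_ρ(u, u) ≤ a(E σ u, E σ u) - ρ ‖E σ u‖²`, with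
equality at `ρ = σ`. So `ρ ↦ s_ρ(u, u)` is a pointwise minimum of affine functions of `ρ`,
hence concave.
-/

theorem ConcaveOn.of_le_of_eq {E : Type*} [AddCommGroup E] [Module ℝ E] {s : Set E}
    (hs : Convex ℝ s) {f : E → ℝ} (g : E → E → ℝ) (hg : ∀ σ ∈ s, ConcaveOn ℝ s (g σ))
    (hle : ∀ σ ∈ s, ∀ x ∈ s, f x ≤ g σ x) (heq : ∀ σ ∈ s, f σ = g σ σ) :
    ConcaveOn ℝ s f := by
  refine ⟨hs, fun x hx y hy t₁ t₂ ht₁ ht₂ ht => ?_⟩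
  have hz : t₁ • x + t₂ • y ∈ s := hs hx hy ht₁ ht₂ ht
  calc t₁ • f x + t₂ • f y
      ≤ t₁ • g _ x + t₂ • g _ y := by
        gcongr
        · exact hle _ hz x hx
        · exact hle _ hz y hy
    _ ≤ g _ (t₁ • x + t₂ • y) := (hg _ hz).2 hx hy ht₁ ht₂ ht
    _ = f (t₁ • x + t₂ • y) := (heq _ hz).symm

theorem concaveOn_const_sub_mul {s : Set ℝ} (hs : Convex ℝ s) (c k : ℝ) :
    ConcaveOn ℝ s (fun ρ => c - ρ * k) := by
  refine ⟨hs, fun x _ y _ t₁ t₂ _ _ ht => le_of_eq ?_⟩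
  simp only [smul_eq_mul]
  linear_combination c * ht

theorem shiftedForm_le_add {V : Type*} [NormedAddCommGroup V] [InnerProductSpace ℝ V]
    (a : V →L[ℝ] V →L[ℝ] ℝ) (hsymm : ∀ v w : V, a v w = a w v) {ρ : ℝ} {p d : V}
    (horth : a p d - ρ * ⟪p, d⟫ = 0) (hd : 0 ≤ a d d - ρ * ⟪d, d⟫) :
    a p p - ρ * ⟪p, p⟫ ≤ a (p + d) (p + d) - ρ * ⟪p + d, p + d⟫ := by
  have hexpand : a (p + d) (p + d) = a p p + 2 * a p d + a d d := by
    simp only [map_add, add_apply, hsymm d p]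
    ring
  rw [hexpand, real_inner_add_add_self]
  linarith

theorem stmt9_general
    {V : Type*} [NormedAddCommGroup V] [InnerProductSpace ℝ V]
    {WΓ : Type*} [NormedAddCommGroup WΓ] [InnerProductSpace ℝ WΓ]
    (a : V →L[ℝ] V →L[ℝ] ℝ)
    (hsymm : ∀ v w : V, a v w = a w v)
    (VI : Submodule ℝ V)
    (α : ℝ)
    (hcoer : ∀ w ∈ VI, a w w ≥ α * ‖w‖ ^ 2)
    (E : ℝ → (WΓ →L[ℝ] V))
    (hext : ∀ σ, σ < α → ∀ u : WΓ, ∀ w ∈ VI, a (E σ u) w - σ * ⟪E σ u, w⟫ = 0)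
    (hdiffVI : ∀ σ₁ σ₂, σ₁ < α → σ₂ < α → ∀ u : WΓ, E σ₁ u - E σ₂ u ∈ VI)
    (u : WΓ) :
    ConcaveOn ℝ (Set.Iio α)
      (fun ρ => a (E ρ u) (E ρ u) - ρ * ⟪E ρ u, E ρ u⟫) := by
  refine ConcaveOn.of_le_of_eq (convex_Iio α)
    (fun σ ρ => a (E σ u) (E σ u) - ρ * ⟪E σ u, E σ u⟫)
    (fun σ _ => concaveOn_const_sub_mul (convex_Iio α) _ _) (fun σ hσ ρ hρ => ?_)
    (fun _ _ => rfl)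
  set d := E σ u - E ρ u
  have hd : d ∈ VI := hdiffVI σ ρ hσ hρ u
  have hdd : 0 ≤ a d d - ρ * ⟪d, d⟫ := by
    rw [real_inner_self_eq_norm_sq]
    nlinarith [hcoer d hd, sq_nonneg ‖d‖, Set.mem_Iio.mp hρ]
  simpa only [d, add_sub_cancel] using shiftedForm_le_add a hsymm (hext ρ hρ u d hd) hdd

/-- For every fixed u ∈ W_Γ, the function ρ ↦ s_ρ(u,u) = a(E_ρu, E_ρu) − ρ·(E_ρu, E_ρu)
is concave on the interval (−∞, α). -/
theorem stmt9
    {V : Type*} [NormedAddCommGroup V] [InnerProductSpace ℝ V] [CompleteSpace V]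
    {WΓ : Type*} [NormedAddCommGroup WΓ] [InnerProductSpace ℝ WΓ] [CompleteSpace WΓ]
    (a : V →L[ℝ] V →L[ℝ] ℝ)
    (hsymm : ∀ v w : V, a v w = a w v)
    (VI : Submodule ℝ V) (hVI : IsClosed (VI : Set V))
    (α : ℝ) (hα : 0 < α)
    (hcoer : ∀ w ∈ VI, a w w ≥ α * ‖w‖ ^ 2)
    (E : ℝ → (WΓ →L[ℝ] V))
    (hext : ∀ σ, σ < α → ∀ u : WΓ, ∀ w ∈ VI, a (E σ u) w - σ * ⟪E σ u, w⟫ = 0)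
    (hdiffVI : ∀ σ₁ σ₂, σ₁ < α → σ₂ < α → ∀ u : WΓ, E σ₁ u - E σ₂ u ∈ VI)
    (u : WΓ) :
    ConcaveOn ℝ (Set.Iio α)
      (fun ρ => a (E ρ u) (E ρ u) - ρ * ⟪E ρ u, E ρ u⟫) :=
  stmt9_general a hsymm VI α hcoer E hext hdiffVI u
end

section
/- Let W_Γ and V be real Hilbert spaces, let s : ℝ → (bounded symmetric bilinear forms on W_Γ) be differentiable at ρ with derivative s', let θ : ℝ → ℝ and u : ℝ → W_Γ be differentiable at ρ with ‖u(σ)‖_Γ = 1 and the eigenvalue equation s_σ(u(σ), w) = θ(σ)·(u(σ), w)_Γ for all w ∈ W_Γ, for all σ in a neighborhood of ρ. Suppose s'(w₁, w₂) = −(E w₁, E w₂) for a bounded linear operator E : W_Γ → V with operator norm at most c_E, and there is g > 0 such that s_ρ(w,w) − θ(ρ)·‖w‖_Γ² ≥ g·‖w‖_Γ² for all w ∈ W_Γ with (w, u(ρ))_Γ = 0. Then ‖u'(ρ)‖_Γ ≤ (c_E/g)·‖E(u(ρ))‖, and consequently s_ρ(u'(ρ), u'(ρ)) − θ(ρ)·‖u'(ρ)‖_Γ²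 ≤ (c_E²/g)·‖E(u(ρ))‖². -/
/-!
Differentiating `‖u σ‖ = 1` gives `u'(ρ) ⊥ u(ρ)`, and differentiating the eigenvalue equation
and testing it with `u'(ρ)` gives (the `θ'` term drops out by orthogonality)
`s_ρ(u', u') − θ(ρ)‖u'‖² = −s'(u(ρ), u') = (E u(ρ), E u')`.
The spectral gap bounds the left side below by `g‖u'‖²`, Cauchy–Schwarz bounds the right side
above by `c_E ‖E u(ρ)‖ ‖u'‖`, and dividing by `‖u'‖` gives both estimates.
-/

open scoped RealInnerProductSpace Topology

theorem inner_eq_zero_of_hasDerivAt_of_norm_eventually_const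
    {F : Type*} [NormedAddCommGroup F] [InnerProductSpace ℝ F]
    {u : ℝ → F} {u' : F} {ρ r : ℝ} (hu : HasDerivAt u u' ρ)
    (hnorm : ∀ᶠ σ in 𝓝 ρ, ‖u σ‖ = r) : ⟪u ρ, u'⟫ = 0 := by
  have hconst : HasDerivAt (‖u ·‖ ^ 2) 0 ρ :=
    (hasDerivAt_const ρ (r ^ 2)).congr_of_eventuallyEq <| by
      filter_upwards [hnorm] with σ hσ
      rw [hσ]
  have := hu.norm_sq.unique hconst
  linarith

theorem eigen_equation_hasDerivAt
    {F : Type*} [NormedAddCommGroup F] [InnerProductSpace ℝ F]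
    {s : ℝ → F →L[ℝ] F →L[ℝ] ℝ} {s' : F →L[ℝ] F →L[ℝ] ℝ}
    {θ : ℝ → ℝ} {θ' : ℝ} {u : ℝ → F} {u' : F} {ρ : ℝ}
    (hs : HasDerivAt s s' ρ) (hθ : HasDerivAt θ θ' ρ) (hu : HasDerivAt u u' ρ)
    (heig : ∀ᶠ σ in 𝓝 ρ, ∀ w : F, s σ (u σ) w = θ σ * ⟪u σ, w⟫) (w : F) :
    s' (u ρ) w + s ρ u' w = θ' * ⟪u ρ, w⟫ + θ ρ * ⟪u', w⟫ := by
  have hlhs : HasDerivAt (fun σ => s σ (u σ) w) (s' (u ρ) w + s ρ u' w) ρ := by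
    simpa using (hs.clm_apply hu).clm_apply (hasDerivAt_const ρ w)
  have hrhs : HasDerivAt (fun σ => θ σ * ⟪u σ, w⟫) (θ' * ⟪u ρ, w⟫ + θ ρ * ⟪u', w⟫) ρ :=
    hθ.mul (by simpa using hu.inner ℝ (hasDerivAt_const ρ w))
  exact (hlhs.congr_of_eventuallyEq (heig.mono fun σ hσ => (hσ w).symm)).unique hrhs

theorem le_div_and_le_sq_div_of_mul_sq_le_le_mul {x A b g : ℝ} (hg : 0 < g) (hx : 0 ≤ x)
    (hb : 0 ≤ b) (hlow : g * x ^ 2 ≤ A) (hup : A ≤ b * x) : x ≤ b / g ∧ A ≤ b ^ 2 / g := by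
  have hx_le : x ≤ b / g := by
    rw [le_div_iff₀ hg]
    rcases hx.eq_or_lt with rfl | hpos
    · simpa using hb
    · nlinarith
  refine ⟨hx_le, hup.trans ?_⟩
  calc b * x ≤ b * (b / g) := mul_le_mul_of_nonneg_left hx_le hb
    _ = b ^ 2 / g := by ring

theorem stmt12_general
    {V : Type*} [NormedAddCommGroup V] [InnerProductSpace ℝ V]
    {WΓ : Type*} [NormedAddCommGroup WΓ] [InnerProductSpace ℝ WΓ]
    (s : ℝ → (WΓ →L[ℝ] WΓ →L[ℝ] ℝ))
    (s' : WΓ →L[ℝ] WΓ →L[ℝ] ℝ)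
    (ρ : ℝ) (hs : HasDerivAt s s' ρ)
    (θ : ℝ → ℝ) (u : ℝ → WΓ) (θ' : ℝ) (u' : WΓ)
    (hθ : HasDerivAt θ θ' ρ) (hu : HasDerivAt u u' ρ)
    (hnorm : ∀ᶠ σ in nhds ρ, ‖u σ‖ = 1)
    (heig : ∀ᶠ σ in nhds ρ, ∀ w : WΓ, s σ (u σ) w = θ σ * ⟪u σ, w⟫)
    (E : WΓ →L[ℝ] V) (cE : ℝ) (hE : ‖E‖ ≤ cE)
    (hs' : ∀ w₁ w₂ : WΓ, s' w₁ w₂ = -⟪E w₁, E w₂⟫)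
    (g : ℝ) (hg : 0 < g)
    (hgap : ∀ w : WΓ, ⟪w, u ρ⟫ = 0 → s ρ w w - θ ρ * ‖w‖ ^ 2 ≥ g * ‖w‖ ^ 2) :
    ‖u'‖ ≤ cE / g * ‖E (u ρ)‖ ∧
      s ρ u' u' - θ ρ * ‖u'‖ ^ 2 ≤ cE ^ 2 / g * ‖E (u ρ)‖ ^ 2 := by
  have horth : ⟪u ρ, u'⟫ = 0 := inner_eq_zero_of_hasDerivAt_of_norm_eventually_const hu hnorm
  have hrayleigh : s ρ u' u' - θ ρ * ‖u'‖ ^ 2 = ⟪E (u ρ), E u'⟫ := by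
    have h := eigen_equation_hasDerivAt hs hθ hu heig u'
    rw [hs', horth, real_inner_self_eq_norm_sq] at h
    linarith
  have hcE : 0 ≤ cE := (norm_nonneg E).trans hE
  have hupper : ⟪E (u ρ), E u'⟫ ≤ cE * ‖E (u ρ)‖ * ‖u'‖ :=
    calc ⟪E (u ρ), E u'⟫ ≤ ‖E (u ρ)‖ * ‖E u'‖ := real_inner_le_norm _ _
      _ ≤ ‖E (u ρ)‖ * (cE * ‖u'‖) := by gcongr; exact E.le_of_opNorm_le hE u'
      _ = cE * ‖E (u ρ)‖ * ‖u'‖ := by ring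
  obtain ⟨hnorm_le, hform_le⟩ := le_div_and_le_sq_div_of_mul_sq_le_le_mul hg (norm_nonneg u')
    (by positivity) (hgap u' (real_inner_comm u' (u ρ) ▸ horth)) (hrayleigh ▸ hupper)
  exact ⟨hnorm_le.trans_eq (by ring), hform_le.trans_eq (by ring)⟩

/-- Bound on the derivative of the normalized eigenvector of a differentiable family of
bounded symmetric bilinear forms under a spectral gap: ‖u'(ρ)‖ ≤ (c_E/g)·‖E(u(ρ))‖ and
s_ρ(u'(ρ), u'(ρ)) − θ(ρ)·‖u'(ρ)‖² ≤ (c_E²/g)·‖E(u(ρ))‖². -/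
theorem stmt12
    {V : Type*} [NormedAddCommGroup V] [InnerProductSpace ℝ V] [CompleteSpace V]
    {WΓ : Type*} [NormedAddCommGroup WΓ] [InnerProductSpace ℝ WΓ] [CompleteSpace WΓ]
    (s : ℝ → (WΓ →L[ℝ] WΓ →L[ℝ] ℝ))
    (hsymm : ∀ σ (w₁ w₂ : WΓ), s σ w₁ w₂ = s σ w₂ w₁)
    (s' : WΓ →L[ℝ] WΓ →L[ℝ] ℝ)
    (ρ : ℝ) (hs : HasDerivAt s s' ρ)
    (θ : ℝ → ℝ) (u : ℝ → WΓ) (θ' : ℝ) (u' : WΓ)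
    (hθ : HasDerivAt θ θ' ρ) (hu : HasDerivAt u u' ρ)
    (hnorm : ∀ᶠ σ in nhds ρ, ‖u σ‖ = 1)
    (heig : ∀ᶠ σ in nhds ρ, ∀ w : WΓ, s σ (u σ) w = θ σ * ⟪u σ, w⟫)
    (E : WΓ →L[ℝ] V) (cE : ℝ) (hE : ‖E‖ ≤ cE)
    (hs' : ∀ w₁ w₂ : WΓ, s' w₁ w₂ = -⟪E w₁, E w₂⟫)
    (g : ℝ) (hg : 0 < g)
    (hgap : ∀ w : WΓ, ⟪w, u ρ⟫ = 0 → s ρ w w - θ ρ * ‖w‖ ^ 2 ≥ g * ‖w‖ ^ 2) :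
    ‖u'‖ ≤ cE / g * ‖E (u ρ)‖ ∧
      s ρ u' u' - θ ρ * ‖u'‖ ^ 2 ≤ cE ^ 2 / g * ‖E (u ρ)‖ ^ 2 :=
  stmt12_general s s' ρ hs θ u θ' u' hθ hu hnorm heig E cE hE hs' g hg hgap
end
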